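/- In homology, the three classes [X̄⁺+X̄⁻], [Ω̄], [S̄₁] in H_2 = ker ∂₂ / im ∂₃ satisfy [X̄⁺+X̄⁻] + [Ω̄] + [S̄₁] = 0; equivalently, the chain X̄⁺+X̄⁻+Ω̄+S̄₁ lies in the image of ∂₃. -/

import Mathlib

abbrev Ch (ι : Type) := ι → ZMod 2

/-- basis chain corresponding to a single cell -/
def ee {ι : Type} [DecidableEq ι] (i : ι) : Ch ι := Pi.single i 1

/-- the ℤ/2-linear boundary map determined by its values on cells -/
def mkBd {ι κ : Type} [Fintype ι] (d : ι → Ch κ) : Ch ι →ₗ[ZMod 2] Ch κ where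
  toFun f := ∑ i, f i • d i
  map_add' x y := by simp [add_smul, Finset.sum_add_distrib]
  map_smul' c x := by simp [Finset.smul_sum, smul_smul]

inductive Cells1
  | Yb1
  | Yb2
  | Ub1
  | Ub2
  | Zb
  | Thb
  | Nab
  deriving DecidableEq

instance : Fintype Cells1 :=
  Fintype.ofList [Cells1.Yb1, Cells1.Yb2, Cells1.Ub1, Cells1.Ub2, Cells1.Zb, Cells1.Thb, Cells1.Nab] (by intro x; cases x <;> decide)

inductive Cells2
  | Y1
  | Y2
  | U1
  | U2
  | Z
  | Th
  | Lb123
  | Lb231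
  | Lb312
  | Lb132
  | Lb213
  | Lb321
  | Mb1
  | Mb2
  | Mb3
  | Nb1
  | Nb2
  | Nb3
  | Pb1
  | Pb2
  | Sb1
  | Sb2
  | Xbp
  | Xbm
  | Vb1p
  | Vb2p
  | Vb1m
  | Vb2m
  | Omb
  deriving DecidableEq

instance : Fintype Cells2 :=
  Fintype.ofList [Cells2.Y1, Cells2.Y2, Cells2.U1, Cells2.U2, Cells2.Z, Cells2.Th, Cells2.Lb123, Cells2.Lb231, Cells2.Lb312, Cells2.Lb132, Cells2.Lb213, Cells2.Lb321, Cells2.Mb1, Cells2.Mb2, Cells2.Mb3, Cells2.Nb1, Cells2.Nb2, Cells2.Nb3, Cells2.Pb1, Cells2.Pb2, Cells2.Sb1, Cells2.Sb2, Cells2.Xbp, Cells2.Xbm, Cells2.Vb1p, Cells2.Vb2p, Cells2.Vb1m, Cells2.Vb2m, Cells2.Omb] (by intro x; cases x <;> decide)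

/-- boundary values on cells -/
def d2 : Cells2 → Ch Cells1
  | .Y1 => ee Cells1.Nab + ee Cells1.Yb1 + ee Cells1.Yb2
  | .Y2 => ee Cells1.Nab + ee Cells1.Yb2 + ee Cells1.Yb1
  | .U1 => ee Cells1.Nab + ee Cells1.Ub1 + ee Cells1.Ub2
  | .U2 => ee Cells1.Nab + ee Cells1.Ub2 + ee Cells1.Ub1
  | .Z => ee Cells1.Nab
  | .Th => 0
  | .Lb123 => ee Cells1.Ub1 + ee Cells1.Zb + ee Cells1.Yb2
  | .Lb231 => ee Cells1.Yb1 + ee Cells1.Ub2 + ee Cells1.Zb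
  | .Lb312 => ee Cells1.Zb + ee Cells1.Yb2 + ee Cells1.Ub2
  | .Lb132 => ee Cells1.Yb1 + ee Cells1.Zb + ee Cells1.Ub2
  | .Lb213 => ee Cells1.Ub1 + ee Cells1.Yb2 + ee Cells1.Zb
  | .Lb321 => ee Cells1.Zb + ee Cells1.Ub2 + ee Cells1.Yb2
  | .Mb1 => ee Cells1.Ub1 + ee Cells1.Yb1 + ee Cells1.Ub2
  | .Mb2 => ee Cells1.Ub1 + ee Cells1.Ub2 + ee Cells1.Yb1
  | .Mb3 => ee Cells1.Yb2
  | .Nb1 => ee Cells1.Yb1 + ee Cells1.Ub2 + ee Cells1.Yb2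
  | .Nb2 => ee Cells1.Yb1 + ee Cells1.Yb2 + ee Cells1.Ub2
  | .Nb3 => ee Cells1.Ub1
  | .Pb1 => 0
  | .Pb2 => 0
  | .Sb1 => 0
  | .Sb2 => 0
  | .Xbp => ee Cells1.Yb1 + ee Cells1.Yb2
  | .Xbm => ee Cells1.Yb1 + ee Cells1.Yb2
  | .Vb1p => ee Cells1.Yb1 + ee Cells1.Ub1
  | .Vb2p => ee Cells1.Yb2 + ee Cells1.Ub2
  | .Vb1m => ee Cells1.Yb1 + ee Cells1.Ub1
  | .Vb2m => ee Cells1.Yb2 + ee Cells1.Ub2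
  | .Omb => 0

/-- the boundary operator -/
def bd2 : Ch Cells2 →ₗ[ZMod 2] Ch Cells1 := mkBd d2

inductive Cells3
  | L123
  | L231
  | L312
  | L132
  | L213
  | L321
  | M1
  | M2
  | M3
  | N1
  | N2
  | N3
  | P1
  | P2
  | S1
  | S2
  | Xp
  | Xm
  | V1p
  | V2p
  | V1m
  | V2m
  | Om
  | Fb1
  | Fb2
  | Fb3
  | Fb4
  | Gb1234
  | Gb1243
  | Gb1324
  | Gb1342
  | Gb1423
  | Gb1432
  | Gb2134
  | Gb2143
  | Gb2341
  | Gb2431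
  | Gb3142
  | Gb3241
  | Hb1
  | Hb2
  | Hb3
  | Hb4
  | Ib1
  | Ib2
  | Ib3
  | Jb123p
  | Jb123m
  | Jb132p
  | Jb132m
  | Jb213p
  | Jb213m
  | Jb231p
  | Jb231m
  | Jb312p
  | Jb312m
  | Jb321p
  | Jb321m
  | Kb1p
  | Kb1m
  | Kb2p
  | Kb2m
  | Kb3p
  | Kb3m
  | Wb1p
  | Wb1m
  | Wb2p
  | Wb2m
  deriving DecidableEq

instance : Fintype Cells3 :=
  Fintype.ofList [Cells3.L123, Cells3.L231, Cells3.L312, Cells3.L132, Cells3.L213, Cells3.L321, Cells3.M1, Cells3.M2, Cells3.M3, Cells3.N1, Cells3.N2, Cells3.N3, Cells3.P1, Cells3.P2, Cells3.S1, Cells3.S2, Cells3.Xp, Cells3.Xm, Cells3.V1p, Cells3.V2p, Cells3.V1m, Cells3.V2m, Cells3.Om, Cells3.Fb1, Cells3.Fb2, Cells3.Fb3, Cells3.Fb4, Cells3.Gb1234, Cells3.Gb1243, Cells3.Gb1324, Cells3.Gb1342, Cells3.Gb1423, Cells3.Gb1432, Cells3.Gb2134, Cells3.Gb2143, Cells3.Gb2341,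 Cells3.Gb2431, Cells3.Gb3142, Cells3.Gb3241, Cells3.Hb1, Cells3.Hb2, Cells3.Hb3, Cells3.Hb4, Cells3.Ib1, Cells3.Ib2, Cells3.Ib3, Cells3.Jb123p, Cells3.Jb123m, Cells3.Jb132p, Cells3.Jb132m, Cells3.Jb213p, Cells3.Jb213m, Cells3.Jb231p, Cells3.Jb231m, Cells3.Jb312p, Cells3.Jb312m, Cells3.Jb321p, Cells3.Jb321m, Cells3.Kb1p, Cells3.Kb1m, Cells3.Kb2p, Cells3.Kb2m, Cells3.Kb3p, Cells3.Kb3m, Cells3.Wb1p, Cells3.Wb1m, Cells3.Wb2p, Cells3.Wb2m] (by intro x; cases x <;> decide)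

/-- boundary values on cells -/
def d3 : Cells3 → Ch Cells2
  | .L123 => ee Cells2.U1 + ee Cells2.Z + ee Cells2.Lb123 + ee Cells2.Lb312
  | .L231 => ee Cells2.Y1 + ee Cells2.U2 + ee Cells2.Lb231 + ee Cells2.Lb123
  | .L312 => ee Cells2.Z + ee Cells2.Y2 + ee Cells2.Lb312 + ee Cells2.Lb231
  | .L132 => ee Cells2.Y1 + ee Cells2.Z + ee Cells2.Lb132 + ee Cells2.Lb321
  | .L213 => ee Cells2.U1 + ee Cells2.Y2 + ee Cells2.Lb213 + ee Cells2.Lb132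
  | .L321 => ee Cells2.Z + ee Cells2.U2 + ee Cells2.Lb321 + ee Cells2.Lb213
  | .M1 => ee Cells2.U1 + ee Cells2.Y1 + ee Cells2.Mb1 + ee Cells2.Mb3
  | .M2 => ee Cells2.U1 + ee Cells2.U2 + ee Cells2.Mb2 + ee Cells2.Mb1
  | .M3 => ee Cells2.Y2 + ee Cells2.U2 + ee Cells2.Mb3 + ee Cells2.Mb2
  | .N1 => ee Cells2.Y1 + ee Cells2.U2 + ee Cells2.Nb1 + ee Cells2.Nb3
  | .N2 => ee Cells2.Y1 + ee Cells2.Y2 + ee Cells2.Nb2 + ee Cells2.Nb1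
  | .N3 => ee Cells2.U1 + ee Cells2.Y2 + ee Cells2.Nb3 + ee Cells2.Nb2
  | .P1 => ee Cells2.Th + ee Cells2.Pb1 + ee Cells2.Pb2
  | .P2 => ee Cells2.Th + ee Cells2.Pb2 + ee Cells2.Pb1
  | .S1 => ee Cells2.Th + ee Cells2.Sb1 + ee Cells2.Sb2
  | .S2 => ee Cells2.Th + ee Cells2.Sb2 + ee Cells2.Sb1
  | .Xp => ee Cells2.Y1 + ee Cells2.Y2 + ee Cells2.Th
  | .Xm => ee Cells2.Y1 + ee Cells2.Y2
  | .V1p => ee Cells2.Y1 + ee Cells2.U1 + ee Cells2.Vb1p + ee Cells2.Vb2p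
  | .V2p => ee Cells2.Y2 + ee Cells2.U2 + ee Cells2.Vb2p + ee Cells2.Vb1p
  | .V1m => ee Cells2.Y1 + ee Cells2.U1 + ee Cells2.Th + ee Cells2.Vb1m + ee Cells2.Vb2m
  | .V2m => ee Cells2.Y2 + ee Cells2.U2 + ee Cells2.Th + ee Cells2.Vb2m + ee Cells2.Vb1m
  | .Om => 0
  | .Fb1 => ee Cells2.Mb1 + ee Cells2.Lb123 + ee Cells2.Lb132 + ee Cells2.Mb3
  | .Fb2 => ee Cells2.Mb1 + ee Cells2.Mb2 + ee Cells2.Lb231 + ee Cells2.Lb132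
  | .Fb3 => ee Cells2.Lb213 + ee Cells2.Mb2 + ee Cells2.Mb3 + ee Cells2.Lb231
  | .Fb4 => ee Cells2.Lb312 + ee Cells2.Lb321
  | .Gb1234 => ee Cells2.Lb123 + ee Cells2.Nb3 + ee Cells2.Lb312 + ee Cells2.Nb1 + ee Cells2.Xbm
  | .Gb1243 => ee Cells2.Lb132 + ee Cells2.Nb2 + ee Cells2.Lb312 + ee Cells2.Mb3 + ee Cells2.Vb2p
  | .Gb1324 => ee Cells2.Mb1 + ee Cells2.Vb1m + ee Cells2.Sb1 + ee Cells2.Nb2 + ee Cells2.Xbm + ee Cells2.Omb + ee Cells2.Sb2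
  | .Gb1342 => ee Cells2.Nb2 + ee Cells2.Xbm + ee Cells2.Mb3 + ee Cells2.Vb2m + ee Cells2.Omb
  | .Gb1423 => ee Cells2.Mb1 + ee Cells2.Lb213 + ee Cells2.Nb3 + ee Cells2.Vb1p + ee Cells2.Lb312
  | .Gb1432 => ee Cells2.Nb3 + ee Cells2.Lb213 + ee Cells2.Nb2 + ee Cells2.Xbm + ee Cells2.Lb321
  | .Gb2134 => ee Cells2.Lb123 + ee Cells2.Mb2 + ee Cells2.Lb321 + ee Cells2.Nb3 + ee Cells2.Vb1p
  | .Gb2143 => ee Cells2.Lb132 + ee Cells2.Nb1 + ee Cells2.Lb321 + ee Cells2.Nb2 + ee Cells2.Xbm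
  | .Gb2341 => ee Cells2.Nb2 + ee Cells2.Lb231 + ee Cells2.Nb1 + ee Cells2.Xbm + ee Cells2.Lb312
  | .Gb2431 => ee Cells2.Mb2 + ee Cells2.Nb1 + ee Cells2.Xbm + ee Cells2.Sb1 + ee Cells2.Omb + ee Cells2.Vb1m + ee Cells2.Sb2
  | .Gb3142 => ee Cells2.Mb3 + ee Cells2.Vb2m + ee Cells2.Nb1 + ee Cells2.Xbm + ee Cells2.Omb
  | .Gb3241 => ee Cells2.Nb1 + ee Cells2.Lb231 + ee Cells2.Mb3 + ee Cells2.Vb2p + ee Cells2.Lb321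
  | .Hb1 => ee Cells2.Mb1 + ee Cells2.Nb3 + ee Cells2.Nb2 + ee Cells2.Mb3
  | .Hb2 => ee Cells2.Mb1 + ee Cells2.Mb2 + ee Cells2.Nb1 + ee Cells2.Nb2
  | .Hb3 => ee Cells2.Nb3 + ee Cells2.Mb2 + ee Cells2.Mb3 + ee Cells2.Nb1
  | .Hb4 => ee Cells2.Nb2 + ee Cells2.Nb1
  | .Ib1 => ee Cells2.Sb1 + ee Cells2.Pb1 + ee Cells2.Sb2
  | .Ib2 => ee Cells2.Sb1 + ee Cells2.Sb2 + ee Cells2.Pb1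
  | .Ib3 => ee Cells2.Pb2
  | .Jb123p => ee Cells2.Xbm + ee Cells2.Mb1 + ee Cells2.Nb3 + ee Cells2.Vb2p
  | .Jb123m => ee Cells2.Sb1 + ee Cells2.Xbp + ee Cells2.Mb1 + ee Cells2.Nb3 + ee Cells2.Vb2m
  | .Jb132p => ee Cells2.Vb1m + ee Cells2.Xbp + ee Cells2.Mb1 + ee Cells2.Nb2 + ee Cells2.Sb2
  | .Jb132m => ee Cells2.Vb1p + ee Cells2.Xbm + ee Cells2.Mb1 + ee Cells2.Nb2
  | .Jb213p => ee Cells2.Sb1 + ee Cells2.Vb2m + ee Cells2.Mb2 + ee Cells2.Nb3 + ee Cells2.Xbp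
  | .Jb213m => ee Cells2.Vb2p + ee Cells2.Mb2 + ee Cells2.Nb3 + ee Cells2.Xbm
  | .Jb231p => ee Cells2.Vb1p + ee Cells2.Mb2 + ee Cells2.Nb1 + ee Cells2.Xbm
  | .Jb231m => ee Cells2.Vb1m + ee Cells2.Sb2 + ee Cells2.Mb2 + ee Cells2.Nb1 + ee Cells2.Xbp
  | .Jb312p => ee Cells2.Xbm + ee Cells2.Vb2p + ee Cells2.Mb3 + ee Cells2.Nb2
  | .Jb312m => ee Cells2.Xbp + ee Cells2.Vb2m + ee Cells2.Mb3 + ee Cells2.Nb2 + ee Cells2.Sb2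
  | .Jb321p => ee Cells2.Xbp + ee Cells2.Mb3 + ee Cells2.Nb1 + ee Cells2.Sb2 + ee Cells2.Vb2m
  | .Jb321m => ee Cells2.Xbm + ee Cells2.Mb3 + ee Cells2.Nb1 + ee Cells2.Vb2p
  | .Kb1p => ee Cells2.Vb1p + ee Cells2.Nb3 + ee Cells2.Nb2 + ee Cells2.Vb2p
  | .Kb1m => ee Cells2.Vb1m + ee Cells2.Pb2 + ee Cells2.Nb3 + ee Cells2.Nb2 + ee Cells2.Vb2m
  | .Kb2p => ee Cells2.Vb1p + ee Cells2.Vb2p + ee Cells2.Nb1 + ee Cells2.Nb3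
  | .Kb2m => ee Cells2.Vb1m + ee Cells2.Vb2m + ee Cells2.Nb1 + ee Cells2.Nb3 + ee Cells2.Pb2
  | .Kb3p => ee Cells2.Nb1 + ee Cells2.Nb2
  | .Kb3m => ee Cells2.Pb1 + ee Cells2.Nb1 + ee Cells2.Nb2
  | .Wb1p => ee Cells2.Pb1 + ee Cells2.Vb1p + ee Cells2.Vb1m + ee Cells2.Omb
  | .Wb1m => ee Cells2.Pb1 + ee Cells2.Vb1p + ee Cells2.Vb1m + ee Cells2.Omb
  | .Wb2p => ee Cells2.Pb2 + ee Cells2.Vb2p + ee Cells2.Vb2m + ee Cells2.Omb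
  | .Wb2m => ee Cells2.Pb2 + ee Cells2.Vb2p + ee Cells2.Vb2m + ee Cells2.Omb

/-- the boundary operator -/
def bd3 : Ch Cells3 →ₗ[ZMod 2] Ch Cells2 := mkBd d3


/-! The 3-chain Ḡ₁₃₂₄ + J̄₁₂₃⁻ already has X̄⁺ + X̄⁻ + Ω̄ in its boundary, together with the
error terms N̄₂ + N̄₃ + V̄₁⁻ + V̄₂⁻ + S̄₂. Adding V₁⁻ + S₁ trades V̄₁⁻ + V̄₂⁻ + S̄₂ for S̄₁ + Y₁ + U₁,
adding N₁ + N₂ trades N̄₂ + N̄₃ for Y₂ + U₂, and the cycle L₁₂₃ + L₂₃₁ + L₃₁₂ has boundary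
exactly Y₁ + Y₂ + U₁ + U₂, so everything but X̄⁺ + X̄⁻ + Ω̄ + S̄₁ cancels mod 2. -/

lemma mkBd_ee {ι κ : Type} [Fintype ι] [DecidableEq ι] (d : ι → Ch κ) (i : ι) :
    mkBd d (ee i) = d i := by
  simp [mkBd, ee, Pi.single_apply]

section
open Cells2 Cells3

lemma bd3_L123_add_L231_add_L312 :
    bd3 (ee L123 + ee L231 + ee L312) = ee Y1 + ee Y2 + ee U1 + ee U2 := by
  simp only [bd3, map_add, mkBd_ee]
  decide

lemma bd3_N1_add_N2 : bd3 (ee N1 + ee N2) = ee Y2 + ee U2 + ee Nb2 + ee Nb3 := by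
  simp only [bd3, map_add, mkBd_ee]
  decide

lemma bd3_V1m_add_S1 :
    bd3 (ee V1m + ee S1) = ee Y1 + ee U1 + ee Vb1m + ee Vb2m + ee Sb1 + ee Sb2 := by
  simp only [bd3, map_add, mkBd_ee]
  decide

lemma bd3_Gb1324_add_Jb123m : bd3 (ee Gb1324 + ee Jb123m) =
    ee Xbp + ee Xbm + ee Omb + ee Nb2 + ee Nb3 + ee Vb1m + ee Vb2m + ee Sb2 := by
  simp only [bd3, map_add, mkBd_ee]
  decide

def fillingChain : Ch Cells3 :=
  (ee L123 + ee L231 + ee L312) + (ee N1 + ee N2) + (ee V1m + ee S1) + (ee Gb1324 + ee Jb123m)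

lemma bd3_fillingChain : bd3 fillingChain = ee Xbp + ee Xbm + ee Omb + ee Sb1 := by
  rw [fillingChain, map_add, map_add, map_add, bd3_L123_add_L231_add_L312, bd3_N1_add_N2,
    bd3_V1m_add_S1, bd3_Gb1324_add_Jb123m]
  decide

end

/-- [X̄⁺+X̄⁻] + [Ω̄] + [S̄₁] = 0 in H₂ = ker ∂₂ / im ∂₃; equivalently the chain
X̄⁺+X̄⁻+Ω̄+S̄₁ lies in the image of ∂₃. -/
theorem sum_of_three_classes_zero :
    (ee Cells2.Xbp + ee Cells2.Xbm + ee Cells2.Omb + ee Cells2.Sb1) ∈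
      LinearMap.range bd3 :=
  ⟨fillingChain, bd3_fillingChain⟩
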